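/- Fix K ≥ 1 and nonnegative weights w₁, …, w_K ≥ 0. The function F : ℝ^K → ℝ defined by F(z₁, …, z_K) = −∑_{k=1}^K w_k · log p(z_k), where p(z) = 2(1 − Φ(|z|)) is the two-sided p-value function, is convex on ℝ^K. -/

import Mathlib

/-- The standard normal density φ(t) = (1/√(2π))·exp(−t²/2). -/
noncomputable def stdNormalPDF (t : ℝ) : ℝ :=
  (Real.sqrt (2 * Real.pi))⁻¹ * Real.exp (-t ^ 2 / 2)

/-- The standard normal cumulative distribution function Φ(t) = ∫_{−∞}^t φ(s) ds. -/
noncomputable def stdNormalCDF (t : ℝ) : ℝ :=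
  ∫ s in Set.Iic t, stdNormalPDF s

/-- The two-sided p-value function p(z) = 2(1 − Φ(|z|)). -/
noncomputable def pValue (z : ℝ) : ℝ := 2 * (1 - stdNormalCDF |z|)

/-!
The function `h(t) = -log (2 (1 - Φ t))` has derivative `h' = φ / Q` with `Q = 1 - Φ` the Gaussian
tail, and `h'' = φ (φ - t Q) / Q²`. The Mills-ratio bound `t Q(t) ≤ φ(t)`, which for `t > 0`
comes from `t ∫_t^∞ φ ≤ ∫_t^∞ s φ(s) ds = φ(t)`, makes `h'' ≥ 0`; so `h` is convex and, as
`h' > 0`, increasing. Hence `-log p(z) = h |z|` is convex, and so is any nonnegative combination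
of such functions of the coordinates.
-/

open MeasureTheory Set Real Filter ProbabilityTheory

theorem ConvexOn.finsetSum {𝕜 E β ι : Type*} [Semiring 𝕜] [PartialOrder 𝕜]
    [AddCommMonoid E] [AddCommMonoid β] [PartialOrder β] [IsOrderedAddMonoid β]
    [SMul 𝕜 E] [Module 𝕜 β] [PosSMulMono 𝕜 β] {s : Set E} (hs : Convex 𝕜 s)
    (t : Finset ι) {f : ι → E → β} (hf : ∀ i ∈ t, ConvexOn 𝕜 s (f i)) :
    ConvexOn 𝕜 s fun x => ∑ i ∈ t, f i x := by
  classical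
  induction t using Finset.induction_on with
  | empty => simpa using convexOn_const (0 : β) hs
  | insert i t hi ih =>
    simp only [Finset.sum_insert hi]
    exact (hf i (Finset.mem_insert_self i t)).add
      (ih fun j hj => hf j (Finset.mem_insert_of_mem hj))

theorem ConvexOn.comp_abs {g : ℝ → ℝ} (hg : ConvexOn ℝ (Ici 0) g)
    (hg_mono : MonotoneOn g (Ici 0)) : ConvexOn ℝ univ fun x => g |x| := by
  have h_image : (fun x : ℝ => |x|) '' univ = Ici 0 := by
    ext y
    exact ⟨by rintro ⟨x, -, rfl⟩; exact abs_nonneg x, fun hy => ⟨y, trivial, abs_of_nonneg hy⟩⟩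
  rw [← h_image] at hg hg_mono
  exact hg.comp (convexOn_univ_norm (E := ℝ)) hg_mono

theorem stdNormalPDF_eq_gaussianPDFReal : stdNormalPDF = gaussianPDFReal 0 1 := by
  ext t
  simp [stdNormalPDF, gaussianPDFReal]

theorem stdNormalPDF_pos (t : ℝ) : 0 < stdNormalPDF t := by
  unfold stdNormalPDF
  positivity

theorem integrable_stdNormalPDF : Integrable stdNormalPDF := by
  rw [stdNormalPDF_eq_gaussianPDFReal]
  exact integrable_gaussianPDFReal 0 1

theorem hasDerivAt_stdNormalPDF (t : ℝ) :
    HasDerivAt stdNormalPDF (-t * stdNormalPDF t) t := by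
  have h_exponent : HasDerivAt (fun u : ℝ => -u ^ 2 / 2) (-t) t :=
    ((hasDerivAt_pow 2 t).neg.div_const 2).congr_deriv (by ring)
  exact (h_exponent.exp.const_mul (√(2 * π))⁻¹).congr_deriv (by unfold stdNormalPDF; ring)

theorem continuous_stdNormalPDF : Continuous stdNormalPDF :=
  continuous_iff_continuousAt.2 fun t => (hasDerivAt_stdNormalPDF t).continuousAt

theorem tendsto_stdNormalPDF_atTop : Tendsto stdNormalPDF atTop (nhds 0) := by
  have h_exponent : Tendsto (fun t : ℝ => -t ^ 2 / 2) atTop atBot :=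
    (tendsto_neg_atTop_atBot.comp (tendsto_pow_atTop two_ne_zero)).atBot_div_const two_pos
  have := (tendsto_exp_atBot.comp h_exponent).const_mul (√(2 * π))⁻¹
  rw [mul_zero] at this
  exact this

theorem hasDerivAt_stdNormalCDF (t : ℝ) : HasDerivAt stdNormalCDF (stdNormalPDF t) t := by
  have h_eq : ∀ u, stdNormalCDF 0 + ∫ s in (0 : ℝ)..u, stdNormalPDF s = stdNormalCDF u := by
    intro u
    have := intervalIntegral.integral_Iic_sub_Iic (a := 0) (b := u)
      integrable_stdNormalPDF.integrableOn integrable_stdNormalPDF.integrableOn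
    rw [stdNormalCDF, stdNormalCDF, ← this]
    ring
  have : HasDerivAt (fun u => stdNormalCDF 0 + ∫ s in (0 : ℝ)..u, stdNormalPDF s)
      (stdNormalPDF t) t := (intervalIntegral.integral_hasDerivAt_right
    (continuous_stdNormalPDF.intervalIntegrable _ _)
    (continuous_stdNormalPDF.stronglyMeasurableAtFilter _ _)
    continuous_stdNormalPDF.continuousAt).const_add (stdNormalCDF 0)
  exact this.congr_of_eventuallyEq (Eventually.of_forall fun u => (h_eq u).symm)

noncomputable def stdNormalTail (t : ℝ) : ℝ := ∫ s in Ioi t, stdNormalPDF s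

theorem stdNormalTail_eq (t : ℝ) : stdNormalTail t = 1 - stdNormalCDF t := by
  have h_total : ∫ s, stdNormalPDF s = 1 := by
    rw [stdNormalPDF_eq_gaussianPDFReal]
    exact integral_gaussianPDFReal_eq_one 0 one_ne_zero
  rw [← h_total, ← setIntegral_univ, ← Iic_union_Ioi (a := t),
    setIntegral_union (Iic_disjoint_Ioi le_rfl) measurableSet_Ioi
      integrable_stdNormalPDF.integrableOn integrable_stdNormalPDF.integrableOn,
    stdNormalCDF, stdNormalTail]
  ring

theorem stdNormalTail_pos (t : ℝ) : 0 < stdNormalTail t := by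
  rw [stdNormalTail, setIntegral_pos_iff_support_of_nonneg_ae
    (Eventually.of_forall fun s => (stdNormalPDF_pos s).le) integrable_stdNormalPDF.integrableOn,
    Function.support_eq_univ fun s => (stdNormalPDF_pos s).ne', univ_inter]
  simp

theorem hasDerivAt_stdNormalTail (t : ℝ) :
    HasDerivAt stdNormalTail (-stdNormalPDF t) t := by
  rw [show stdNormalTail = fun u => 1 - stdNormalCDF u from funext stdNormalTail_eq]
  exact (hasDerivAt_stdNormalCDF t).const_sub 1

theorem integrableOn_and_integral_Ioi_mul_stdNormalPDF {t : ℝ} (ht : 0 ≤ t) :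
    IntegrableOn (fun s => s * stdNormalPDF s) (Ioi t) ∧
      ∫ s in Ioi t, s * stdNormalPDF s = stdNormalPDF t := by
  have h_deriv : ∀ s ∈ Ioi t, HasDerivAt (fun u => -stdNormalPDF u) (s * stdNormalPDF s) s :=
    fun s _ => (hasDerivAt_stdNormalPDF s).neg.congr_deriv (by ring)
  have h_nonneg : ∀ s ∈ Ioi t, 0 ≤ s * stdNormalPDF s :=
    fun s hs => mul_nonneg (ht.trans hs.le) (stdNormalPDF_pos s).le
  have h_lim : Tendsto (fun u => -stdNormalPDF u) atTop (nhds 0) := by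
    simpa using tendsto_stdNormalPDF_atTop.neg
  refine ⟨integrableOn_Ioi_deriv_of_nonneg continuous_stdNormalPDF.neg.continuousWithinAt
    h_deriv h_nonneg h_lim, ?_⟩
  simpa using integral_Ioi_of_hasDerivAt_of_nonneg continuous_stdNormalPDF.neg.continuousWithinAt
    h_deriv h_nonneg h_lim

theorem mul_stdNormalTail_le (t : ℝ) : t * stdNormalTail t ≤ stdNormalPDF t := by
  rcases le_total t 0 with ht | ht
  · exact (mul_nonpos_of_nonpos_of_nonneg ht (stdNormalTail_pos t).le).trans
      (stdNormalPDF_pos t).le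
  obtain ⟨h_int, h_eq⟩ := integrableOn_and_integral_Ioi_mul_stdNormalPDF ht
  rw [stdNormalTail, ← integral_const_mul, ← h_eq]
  refine setIntegral_mono_on (integrable_stdNormalPDF.integrableOn.const_mul t) h_int
    measurableSet_Ioi fun s hs => ?_
  exact mul_le_mul_of_nonneg_right hs.le (stdNormalPDF_pos s).le

noncomputable def negLogTwoTail (t : ℝ) : ℝ := -log (2 * stdNormalTail t)

theorem hasDerivAt_negLogTwoTail (t : ℝ) :
    HasDerivAt negLogTwoTail (stdNormalPDF t / stdNormalTail t) t := by
  have hQ := (stdNormalTail_pos t).ne'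
  refine (((hasDerivAt_stdNormalTail t).const_mul 2).log (by positivity)).neg.congr_deriv ?_
  field_simp

theorem hasDerivAt_stdNormalPDF_div_stdNormalTail (t : ℝ) :
    HasDerivAt (fun u => stdNormalPDF u / stdNormalTail u)
      (stdNormalPDF t * (stdNormalPDF t - t * stdNormalTail t) / stdNormalTail t ^ 2) t := by
  refine ((hasDerivAt_stdNormalPDF t).div (hasDerivAt_stdNormalTail t)
    (stdNormalTail_pos t).ne').congr_deriv ?_
  ring

theorem convexOn_negLogTwoTail : ConvexOn ℝ univ negLogTwoTail := by
  refine convexOn_of_hasDerivWithinAt2_nonneg convex_univ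
    (fun t _ => (hasDerivAt_negLogTwoTail t).continuousAt.continuousWithinAt)
    (fun t _ => (hasDerivAt_negLogTwoTail t).hasDerivWithinAt)
    (fun t _ => (hasDerivAt_stdNormalPDF_div_stdNormalTail t).hasDerivWithinAt)
    fun t _ => ?_
  have := sub_nonneg.2 (mul_stdNormalTail_le t)
  have := (stdNormalPDF_pos t).le
  positivity

theorem monotone_negLogTwoTail : Monotone negLogTwoTail :=
  monotone_of_hasDerivAt_nonneg hasDerivAt_negLogTwoTail fun t =>
    (div_pos (stdNormalPDF_pos t) (stdNormalTail_pos t)).le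

theorem neg_log_pValue (z : ℝ) : -log (pValue z) = negLogTwoTail |z| := by
  rw [pValue, negLogTwoTail, stdNormalTail_eq]

theorem convexOn_neg_log_pValue : ConvexOn ℝ univ fun z => -log (pValue z) := by
  simp_rw [neg_log_pValue]
  exact (convexOn_negLogTwoTail.subset (subset_univ _) (convex_Ici 0)).comp_abs
    (monotone_negLogTwoTail.monotoneOn _)

theorem stmt_3_general (K : ℕ) (w : Fin K → ℝ) (hw : ∀ k, 0 ≤ w k) :
    ConvexOn ℝ Set.univ
      (fun z : Fin K → ℝ => -∑ k, w k * Real.log (pValue (z k))) := by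
  simp_rw [← Finset.sum_neg_distrib, ← mul_neg]
  refine ConvexOn.finsetSum convex_univ Finset.univ fun k _ => ?_
  have h_coord : ConvexOn ℝ univ fun z : Fin K → ℝ => -log (pValue (z k)) :=
    convexOn_neg_log_pValue.comp_linearMap (LinearMap.proj (R := ℝ) (φ := fun _ => ℝ) k)
  exact h_coord.smul (hw k)

/-- For K ≥ 1 and nonnegative weights w₁, …, w_K ≥ 0, the function
F(z₁, …, z_K) = −∑_{k=1}^K w_k · log p(z_k) is convex on ℝ^K. -/
theorem stmt_3 (K : ℕ) (hK : 1 ≤ K) (w : Fin K → ℝ) (hw : ∀ k, 0 ≤ w k) :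
    ConvexOn ℝ Set.univ
      (fun z : Fin K → ℝ => -∑ k, w k * Real.log (pValue (z k))) :=
  stmt_3_general K w hw
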